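/- Define Q₂(φ)(x) := inf_{y ∈ ℝ^d} { φ(y) + |x − y|² } for a convex function φ : ℝ^d → ℝ bounded below by an affine function. Then for any μ, ν ∈ P₂(ℝ^d) and any ξ ∈ P₂(ℝ^d) with ξ ⪯ ν in convex order, the weak duality inequality holds: ∫ Q₂(φ) dμ − ∫ φ dν ≤ W₂²(μ, ξ). -/

import Mathlib

open MeasureTheory
noncomputable section

/-- Convex order: `μ ⪯ ν` iff `∫ φ dμ ≤ ∫ φ dν` for every convex `φ` for which
both integrals exist. -/
def ConvexOrder {d : ℕ} (μ ν : Measure (EuclideanSpace ℝ (Fin d))) : Prop :=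
  ∀ φ : EuclideanSpace ℝ (Fin d) → ℝ, ConvexOn ℝ Set.univ φ →
    Integrable φ μ → Integrable φ ν → ∫ x, φ x ∂μ ≤ ∫ x, φ x ∂ν

/-- Finite second moment. -/
def HasP2 {d : ℕ} (μ : Measure (EuclideanSpace ℝ (Fin d))) : Prop :=
  Integrable (fun x => ‖x‖ ^ 2) μ

/-- The 2-Wasserstein distance, as an infimum over couplings. -/
def W2 {d : ℕ} (μ ν : Measure (EuclideanSpace ℝ (Fin d))) : ℝ :=
  sInf { r : ℝ |
    ∃ π : Measure (EuclideanSpace ℝ (Fin d) × EuclideanSpace ℝ (Fin d)),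
      π.map Prod.fst = μ ∧ π.map Prod.snd = ν ∧
      r = (∫ p, dist p.1 p.2 ^ 2 ∂π) ^ (1 / 2 : ℝ) }

/-- Backward Wasserstein projection distance `W₂(μ, P_{⪯ν})`. -/
def W2projB {d : ℕ} (μ ν : Measure (EuclideanSpace ℝ (Fin d))) : ℝ :=
  sInf { r : ℝ | ∃ η : Measure (EuclideanSpace ℝ (Fin d)),
    IsProbabilityMeasure η ∧ HasP2 η ∧ ConvexOrder η ν ∧ r = W2 μ η }

/-- Forward Wasserstein projection distance `W₂(P_{μ⪯}, ν)`. -/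
def W2projF {d : ℕ} (μ ν : Measure (EuclideanSpace ℝ (Fin d))) : ℝ :=
  sInf { r : ℝ | ∃ η : Measure (EuclideanSpace ℝ (Fin d)),
    IsProbabilityMeasure η ∧ HasP2 η ∧ ConvexOrder μ η ∧ r = W2 η ν }

/-- Convolution `γ ∗ μ`: the law of `Z + X` with `Z ∼ γ`, `X ∼ μ` independent. -/
def mconv {d : ℕ} (γ μ : Measure (EuclideanSpace ℝ (Fin d))) :
    Measure (EuclideanSpace ℝ (Fin d)) :=
  (γ.prod μ).map (fun p => p.1 + p.2)

end

/-! Integrating `Q₂φ(x) ≤ φ(y) + |x - y|²` against a coupling `π` of `μ` and `ξ` gives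
`∫ Q₂φ dμ - ∫ φ dξ ≤ ∫ |x - y|² dπ`, so it remains to show `∫ φ dξ ≤ ∫ φ dν`. The convex order
only applies once `φ` is known to be `ξ`-integrable, so `φ` is approached from below by its
Pasch–Hausdorff envelopes `inf_y φ(y) + M |x - y|`: these are convex and `M`-Lipschitz, hence
integrable under measures with finite second moment, and monotone convergence as `M → ∞`
yields both the integrability of `φ` under `ξ` and the inequality. -/

open Filter Topology Set

section Envelope

variable {E : Type*} [NormedAddCommGroup E] [NormedSpace ℝ E]
  {φ : E → ℝ} {a : E →L[ℝ] ℝ} {b : ℝ}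

theorem affine_le_add_mul_norm_sub (hab : ∀ y, a y + b ≤ φ y) (x y : E) :
    a x + b ≤ φ y + ‖a‖ * ‖x - y‖ := by
  have := (abs_le.mp ((a.le_opNorm (x - y)).trans_eq' (Real.norm_eq_abs _).symm)).2
  rw [map_sub] at this
  linarith [hab y]

theorem bddBelow_range_add_norm_sub_sq (hab : ∀ y, a y + b ≤ φ y) (x : E) :
    BddBelow (range fun y => φ y + ‖x - y‖ ^ 2) :=
  ⟨a x + b - ‖a‖ ^ 2 / 4, by
    rintro _ ⟨y, rfl⟩
    nlinarith [affine_le_add_mul_norm_sub hab x y, sq_nonneg (‖x - y‖ - ‖a‖ / 2)]⟩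

noncomputable def lipschitzEnvelope (φ : E → ℝ) (M : ℝ) (x : E) : ℝ :=
  ⨅ y, φ y + M * ‖x - y‖

variable {M : ℝ}

theorem bddBelow_range_add_mul_norm_sub (hab : ∀ y, a y + b ≤ φ y) (hM : ‖a‖ ≤ M) (x : E) :
    BddBelow (range fun y => φ y + M * ‖x - y‖) :=
  ⟨a x + b, by
    rintro _ ⟨y, rfl⟩
    exact (affine_le_add_mul_norm_sub hab x y).trans
      (add_le_add_right (mul_le_mul_of_nonneg_right hM (norm_nonneg _)) _)⟩

theorem lipschitzEnvelope_le (hab : ∀ y, a y + b ≤ φ y) (hM : ‖a‖ ≤ M) (x : E) :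
    lipschitzEnvelope φ M x ≤ φ x := by
  simpa [lipschitzEnvelope] using ciInf_le (bddBelow_range_add_mul_norm_sub hab hM x) x

theorem lipschitzEnvelope_mono (hab : ∀ y, a y + b ≤ φ y) (hM : ‖a‖ ≤ M) {M' : ℝ}
    (hMM' : M ≤ M') (x : E) : lipschitzEnvelope φ M x ≤ lipschitzEnvelope φ M' x :=
  le_ciInf fun y => (ciInf_le (bddBelow_range_add_mul_norm_sub hab hM x) y).trans (by gcongr)

theorem lipschitzWith_lipschitzEnvelope (hab : ∀ y, a y + b ≤ φ y) (hM : ‖a‖ ≤ M) :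
    LipschitzWith (Real.toNNReal M) (lipschitzEnvelope φ M) := by
  refine LipschitzWith.of_le_add_mul' M fun x x' => ?_
  rw [lipschitzEnvelope, lipschitzEnvelope, ciInf_add (bddBelow_range_add_mul_norm_sub hab hM x')]
  refine le_ciInf fun y => (ciInf_le (bddBelow_range_add_mul_norm_sub hab hM x) y).trans ?_
  have := norm_sub_le_norm_sub_add_norm_sub x x' y
  rw [dist_eq_norm]
  nlinarith [(norm_nonneg a).trans hM]

theorem convexOn_lipschitzEnvelope (hφ : ConvexOn ℝ univ φ) (hab : ∀ y, a y + b ≤ φ y)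
    (hM : ‖a‖ ≤ M) : ConvexOn ℝ univ (lipschitzEnvelope φ M) := by
  refine ⟨convex_univ, fun x _ x' _ s t hs ht hst => ?_⟩
  simp only [smul_eq_mul, lipschitzEnvelope]
  rw [Real.mul_iInf_of_nonneg hs, Real.mul_iInf_of_nonneg ht]
  refine le_ciInf_add_ciInf fun y y' => ?_
  refine (ciInf_le (bddBelow_range_add_mul_norm_sub hab hM _) (s • y + t • y')).trans ?_
  have hφ' := hφ.2 (mem_univ y) (mem_univ y') hs ht hst
  have hnorm : ‖(s • x + t • x') - (s • y + t • y')‖ ≤ s * ‖x - y‖ + t * ‖x' - y'‖ := by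
    rw [show (s • x + t • x') - (s • y + t • y') = s • (x - y) + t • (x' - y') by module]
    refine (norm_add_le _ _).trans_eq ?_
    rw [norm_smul, norm_smul, Real.norm_of_nonneg hs, Real.norm_of_nonneg ht]
  simp only [smul_eq_mul] at hφ'
  nlinarith [(norm_nonneg a).trans hM]

theorem tendsto_lipschitzEnvelope (hab : ∀ y, a y + b ≤ φ y) {x : E}
    (hφx : LowerSemicontinuousAt φ x) :
    Tendsto (fun M => lipschitzEnvelope φ M x) atTop (𝓝 (φ x)) := by
  refine tendsto_order.2 ⟨fun c hc => ?_, fun c hc => ?_⟩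
  · obtain ⟨c', hcc', hc'⟩ := exists_between hc
    obtain ⟨δ, hδ, hball⟩ := Metric.eventually_nhds_iff.1 (hφx c' hc')
    filter_upwards [eventually_ge_atTop (‖a‖ + (c' - (a x + b)) / δ),
      eventually_ge_atTop ‖a‖] with M hMc' hM
    refine hcc'.trans_le (le_ciInf fun y => ?_)
    -- Off the ball where `φ > c'`, the cone `a x + b + (M - ‖a‖) ‖x - y‖` already exceeds `c'`.
    by_cases hy : dist y x < δ
    · nlinarith [hball hy, norm_nonneg (x - y), norm_nonneg a]
    · have hgap : c' - (a x + b) ≤ (M - ‖a‖) * δ := by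
        rwa [← div_le_iff₀ hδ, le_sub_iff_add_le']
      rw [not_lt, dist_eq_norm'] at hy
      nlinarith [affine_le_add_mul_norm_sub hab x y,
        mul_le_mul_of_nonneg_left hy (sub_nonneg.2 hM)]
  · filter_upwards [eventually_ge_atTop ‖a‖] with M hM
    exact (lipschitzEnvelope_le hab hM x).trans_lt hc

end Envelope

theorem integrable_and_integral_le_of_monotone {α : Type*} [MeasurableSpace α]
    {μ : Measure α} {f : ℕ → α → ℝ} {F : α → ℝ} {C : ℝ}
    (hf : ∀ n, Integrable (f n) μ) (h_mono : ∀ᵐ x ∂μ, Monotone fun n => f n x)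
    (h_tendsto : ∀ᵐ x ∂μ, Tendsto (fun n => f n x) atTop (𝓝 (F x)))
    (h_bound : ∀ n, ∫ x, f n x ∂μ ≤ C) :
    Integrable F μ ∧ ∫ x, F x ∂μ ≤ C := by
  have hF_ge : ∀ᵐ x ∂μ, 0 ≤ F x - f 0 x := by
    filter_upwards [h_tendsto, h_mono] with x hx hmx
    exact sub_nonneg.2 (ge_of_tendsto' hx fun n => hmx (Nat.zero_le n))
  have hlint : ∫⁻ x, ENNReal.ofReal (F x - f 0 x) ∂μ ≤ ENNReal.ofReal (C - ∫ x, f 0 x ∂μ) := by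
    refine le_of_tendsto' (lintegral_tendsto_of_tendsto_of_monotone
      (fun n => ((hf n).sub (hf 0)).aemeasurable.ennreal_ofReal) ?_ ?_) fun n => ?_
    · filter_upwards [h_mono] with x hx n m hnm
      exact ENNReal.ofReal_le_ofReal (sub_le_sub_right (hx hnm) _)
    · filter_upwards [h_tendsto] with x hx
      exact (ENNReal.continuous_ofReal.tendsto _).comp (hx.sub_const _)
    · have h_nonneg : 0 ≤ᵐ[μ] f n - f 0 := by
        filter_upwards [h_mono] with x hx
        exact sub_nonneg.2 (hx (Nat.zero_le n))
      rw [← ofReal_integral_eq_lintegral_ofReal ((hf n).sub (hf 0)) h_nonneg,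
        integral_sub' (hf n) (hf 0)]
      exact ENNReal.ofReal_le_ofReal (sub_le_sub_right (h_bound n) _)
  have hF : Integrable F μ := by
    have hF_sub : Integrable (fun x => F x - f 0 x) μ :=
      ⟨(aestronglyMeasurable_of_tendsto_ae atTop (fun n => (hf n).1) h_tendsto).sub (hf 0).1,
        (hasFiniteIntegral_iff_ofReal hF_ge).2 (hlint.trans_lt ENNReal.ofReal_lt_top)⟩
    exact (hF_sub.add (hf 0)).congr (.of_forall fun x => sub_add_cancel (F x) (f 0 x))
  exact ⟨hF, le_of_tendsto' (integral_tendsto_of_tendsto_of_monotone hf hF h_mono h_tendsto)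
    h_bound⟩

theorem LipschitzWith.integrable_of_integrable_norm {E : Type*} [NormedAddCommGroup E]
    [MeasurableSpace E] [OpensMeasurableSpace E] {μ : Measure E} [IsFiniteMeasure μ]
    {K : NNReal} {f : E → ℝ} (hf : LipschitzWith K f) (hμ : Integrable (‖·‖) μ) :
    Integrable f μ := by
  refine ((integrable_const ‖f 0‖).add (hμ.const_mul K)).mono'
    hf.continuous.aestronglyMeasurable (.of_forall fun x => ?_)
  have := hf.dist_le_mul x 0
  rw [dist_zero_right, dist_eq_norm] at this
  show ‖f x‖ ≤ ‖f 0‖ + K * ‖x‖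
  linarith [norm_le_norm_add_norm_sub' (f x) (f 0)]

theorem integral_map_fst_sub_integral_map_snd_le {α β : Type*} [MeasurableSpace α]
    [MeasurableSpace β] {π : Measure (α × β)} {f : α → ℝ} {g : β → ℝ} {c : α × β → ℝ}
    (hf : Integrable f (π.map Prod.fst)) (hg : Integrable g (π.map Prod.snd))
    (hc : Integrable c π) (h : ∀ p, f p.1 ≤ g p.2 + c p) :
    ∫ x, f x ∂(π.map Prod.fst) - ∫ y, g y ∂(π.map Prod.snd) ≤ ∫ p, c p ∂π := by
  have hg' : Integrable (fun p : α × β => g p.2) π := hg.comp_measurable measurable_snd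
  rw [integral_map measurable_fst.aemeasurable hf.1, integral_map measurable_snd.aemeasurable hg.1,
    sub_le_iff_le_add', ← integral_add hg' hc]
  exact integral_mono (hf.comp_measurable measurable_fst) (hg'.add hc) h

section Euclidean

variable {d : ℕ} {μ ν ξ : Measure (EuclideanSpace ℝ (Fin d))}

theorem HasP2.memLp (hμ : HasP2 μ) : MemLp id 2 μ :=
  (memLp_two_iff_integrable_sq_norm aestronglyMeasurable_id).2 hμ

theorem HasP2.integrable_norm [IsFiniteMeasure μ] (hμ : HasP2 μ) : Integrable (‖·‖) μ :=
  (hμ.memLp.integrable one_le_two).norm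

theorem integrable_dist_sq_of_map_eq
    {π : Measure (EuclideanSpace ℝ (Fin d) × EuclideanSpace ℝ (Fin d))}
    (hμ : HasP2 μ) (hξ : HasP2 ξ) (h₁ : π.map Prod.fst = μ) (h₂ : π.map Prod.snd = ξ) :
    Integrable (fun p => dist p.1 p.2 ^ 2) π := by
  have h₁' : MemLp Prod.fst 2 π :=
    (memLp_map_measure_iff aestronglyMeasurable_id measurable_fst.aemeasurable).1 (h₁ ▸ hμ.memLp)
  have h₂' : MemLp Prod.snd 2 π :=
    (memLp_map_measure_iff aestronglyMeasurable_id measurable_snd.aemeasurable).1 (h₂ ▸ hξ.memLp)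
  simpa only [dist_eq_norm, Pi.sub_apply] using
    (memLp_two_iff_integrable_sq_norm (h₁'.sub h₂').1).1 (h₁'.sub h₂')

theorem ConvexOrder.integrable_and_integral_le [IsFiniteMeasure ξ] [IsFiniteMeasure ν]
    (hξν : ConvexOrder ξ ν) (hξ : HasP2 ξ) (hν : HasP2 ν) {φ : EuclideanSpace ℝ (Fin d) → ℝ}
    (hφ : ConvexOn ℝ univ φ) {a : EuclideanSpace ℝ (Fin d) →L[ℝ] ℝ} {b : ℝ}
    (hab : ∀ y, a y + b ≤ φ y) (hφν : Integrable φ ν) :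
    Integrable φ ξ ∧ ∫ y, φ y ∂ξ ≤ ∫ y, φ y ∂ν := by
  have hM (n : ℕ) : ‖a‖ ≤ ‖a‖ + n := le_add_of_nonneg_right n.cast_nonneg
  have hint {η : Measure (EuclideanSpace ℝ (Fin d))} [IsFiniteMeasure η] (hη : HasP2 η) (n : ℕ) :
      Integrable (lipschitzEnvelope φ (‖a‖ + n)) η :=
    (lipschitzWith_lipschitzEnvelope hab (hM n)).integrable_of_integrable_norm hη.integrable_norm
  have hφc : Continuous φ := continuousOn_univ.1 (hφ.continuousOn isOpen_univ)
  have h_tendsto (x) : Tendsto (fun n : ℕ => lipschitzEnvelope φ (‖a‖ + n) x) atTop (𝓝 (φ x)) :=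
    (tendsto_lipschitzEnvelope hab hφc.continuousAt.lowerSemicontinuousAt).comp
      (tendsto_atTop_add_const_left _ ‖a‖ tendsto_natCast_atTop_atTop)
  refine integrable_and_integral_le_of_monotone (hint hξ)
    (.of_forall fun x n m hnm => lipschitzEnvelope_mono hab (hM n) (by gcongr) x)
    (.of_forall h_tendsto) fun n => ?_
  exact (hξν _ (convexOn_lipschitzEnvelope hφ hab (hM n)) (hint hξ n) (hint hν n)).trans
    (integral_mono (hint hν n) hφν (lipschitzEnvelope_le hab (hM n)))

theorem le_W2_sq [IsProbabilityMeasure μ] [IsProbabilityMeasure ξ] {L : ℝ}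
    (h : ∀ π : Measure (EuclideanSpace ℝ (Fin d) × EuclideanSpace ℝ (Fin d)),
      π.map Prod.fst = μ → π.map Prod.snd = ξ → L ≤ ∫ p, dist p.1 p.2 ^ 2 ∂π) :
    L ≤ W2 μ ξ ^ 2 := by
  unfold W2
  refine (Real.sqrt_le_iff.1 ?_).2
  refine le_csInf ⟨_, μ.prod ξ, by simp, by simp, rfl⟩ ?_
  rintro _ ⟨π, h₁, h₂, rfl⟩
  rw [← Real.sqrt_eq_rpow]
  exact Real.sqrt_le_sqrt (h π h₁ h₂)

end Euclidean

/-- Weak duality for the backward Wasserstein projection: for convex `φ` bounded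
below by an affine function and any `ξ ⪯ ν`,
`∫ Q₂(φ) dμ − ∫ φ dν ≤ W₂²(μ, ξ)` where `Q₂(φ)(x) = inf_y (φ(y) + |x−y|²)`. -/
theorem weak_duality_backward_projection {d : ℕ}
    (φ : EuclideanSpace ℝ (Fin d) → ℝ) (hφ : ConvexOn ℝ Set.univ φ)
    (haff : ∃ (a : EuclideanSpace ℝ (Fin d) →L[ℝ] ℝ) (b : ℝ), ∀ y, a y + b ≤ φ y)
    (μ ν ξ : Measure (EuclideanSpace ℝ (Fin d)))
    [IsProbabilityMeasure μ] [IsProbabilityMeasure ν] [IsProbabilityMeasure ξ]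
    (hμ2 : HasP2 μ) (hν2 : HasP2 ν) (hξ2 : HasP2 ξ)
    (hξν : ConvexOrder ξ ν)
    (hint1 : Integrable (fun x => ⨅ y, (φ y + ‖x - y‖ ^ 2)) μ)
    (hint2 : Integrable φ ν) :
    (∫ x, (⨅ y, (φ y + ‖x - y‖ ^ 2)) ∂μ) - ∫ y, φ y ∂ν ≤ W2 μ ξ ^ 2 := by
  obtain ⟨a, b, hab⟩ := haff
  obtain ⟨hφξ, hφ_le⟩ := hξν.integrable_and_integral_le hξ2 hν2 hφ hab hint2
  refine le_W2_sq fun π h₁ h₂ => ?_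
  have hcoupling := integral_map_fst_sub_integral_map_snd_le (h₁ ▸ hint1) (h₂ ▸ hφξ)
    (integrable_dist_sq_of_map_eq hμ2 hξ2 h₁ h₂) fun p => by
      rw [dist_eq_norm]
      exact ciInf_le (bddBelow_range_add_norm_sub_sq hab p.1) p.2
  rw [h₁, h₂] at hcoupling
  linarith
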